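/- arXiv:1507.07595 — 3 statements merged into one kernel-verified Lean document; each statement's English description precedes it below -/
import Mathlib

section
/- Let μ, L > 0 with L ≥ μ, let n ≥ 1 be an integer, 0 < δ < 1/2 a real, and suppose κ = L/μ ≤ n^(1-2δ)/32. With η = 1/(16 n^δ L) and T = n, we have 1/(μη(1-4Lη)T) + 4Lη(T+1)/((1-4Lη)T) ≤ 2/n^δ. -/
/-!
Write `a = n ^ δ` and `b = 4 L η`, so that `4 a b = 1` and `b ≤ 1/4`. The condition-number bound
says `n ≥ 32 κ a²`, i.e. `μ η T ≥ 2 a`. Then each of the two terms is at most `1 / (2 a (1 - b))`,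
and their sum `1 / (a (1 - b))` is at most `2 / a` because `b ≤ 1/2`.
-/

theorem one_div_add_mul_div_le_two_div {a b c T : ℝ} (ha : 0 < a) (hb : b ≤ 1 / 2)
    (hab : 4 * a * b ≤ 1) (hcT : 2 * a ≤ c * T) (hT : 1 ≤ T) :
    1 / (c * (1 - b) * T) + b * (T + 1) / ((1 - b) * T) ≤ 2 / a := by
  have h1b : 0 < 1 - b := by linarith
  have hT0 : 0 < T := by linarith
  have first : 1 / (c * (1 - b) * T) ≤ 1 / (2 * a * (1 - b)) := by
    rw [show c * (1 - b) * T = c * T * (1 - b) by ring]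
    gcongr
  have second : b * (T + 1) / ((1 - b) * T) ≤ 1 / (2 * a * (1 - b)) := by
    rw [div_le_div_iff₀ (by positivity) (by positivity)]
    have key : 2 * a * b * (T + 1) ≤ T := by nlinarith
    nlinarith [mul_le_mul_of_nonneg_left key h1b.le]
  calc 1 / (c * (1 - b) * T) + b * (T + 1) / ((1 - b) * T)
      ≤ 1 / (2 * a * (1 - b)) + 1 / (2 * a * (1 - b)) := add_le_add first second
    _ = 1 / (a * (1 - b)) := by field_simp; ring
    _ ≤ 2 / a := by
      rw [div_le_div_iff₀ (by positivity) ha]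
      nlinarith

theorem two_mul_rpow_le_of_div_le_rpow {L μ x δ : ℝ} (hμ : 0 < μ) (hL : 0 < L) (hx : 0 < x)
    (hκ : L / μ ≤ x ^ (1 - 2 * δ) / 32) :
    2 * x ^ δ ≤ μ * (1 / (16 * x ^ δ * L)) * x := by
  have ha : 0 < x ^ δ := Real.rpow_pos_of_pos hx δ
  have hsplit : x ^ (1 - 2 * δ) * x ^ δ * x ^ δ = x := by
    rw [← Real.rpow_add hx, ← Real.rpow_add hx, show 1 - 2 * δ + δ + δ = 1 by ring,
      Real.rpow_one]
  have hκ' : 32 * L ≤ μ * x ^ (1 - 2 * δ) := by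
    rw [div_le_div_iff₀ hμ (by norm_num)] at hκ
    linarith
  rw [mul_one_div, div_mul_eq_mul_div, le_div_iff₀ (by positivity)]
  calc 2 * x ^ δ * (16 * x ^ δ * L) = 32 * L * (x ^ δ * x ^ δ) := by ring
    _ ≤ μ * x ^ (1 - 2 * δ) * (x ^ δ * x ^ δ) := by gcongr
    _ = μ * (x ^ (1 - 2 * δ) * x ^ δ * x ^ δ) := by ring
    _ = μ * x := by rw [hsplit]

theorem dsvrg_contraction_general (L μ : ℝ) (n : ℕ) (δ : ℝ) (hμ : 0 < μ) (hμL : μ ≤ L)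
    (hn : 1 ≤ n) (hδ0 : 0 < δ)
    (hκ : L / μ ≤ (n : ℝ) ^ (1 - 2 * δ) / 32)
    (η T : ℝ) (hη : η = 1 / (16 * (n : ℝ) ^ δ * L)) (hT : T = n) :
    1 / (μ * η * (1 - 4 * L * η) * T) + 4 * L * η * (T + 1) / ((1 - 4 * L * η) * T)
      ≤ 2 / (n : ℝ) ^ δ := by
  have hL : 0 < L := hμ.trans_le hμL
  have hn1 : (1 : ℝ) ≤ n := by exact_mod_cast hn
  have ha : 1 ≤ (n : ℝ) ^ δ := Real.one_le_rpow hn1 hδ0.le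
  have hab : 4 * (n : ℝ) ^ δ * (4 * L * η) = 1 := by
    rw [hη]
    field_simp
    ring
  apply one_div_add_mul_div_le_two_div (by positivity) (by nlinarith) hab.le _ (hT ▸ hn1)
  rw [hT, hη]
  exact two_mul_rpow_le_of_div_le_rpow hμ hL (by positivity) hκ

theorem dsvrg_contraction (L μ : ℝ) (n : ℕ) (δ : ℝ) (hμ : 0 < μ) (hμL : μ ≤ L)
    (hn : 1 ≤ n) (hδ0 : 0 < δ) (hδ1 : δ < 1 / 2)
    (hκ : L / μ ≤ (n : ℝ) ^ (1 - 2 * δ) / 32)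
    (η T : ℝ) (hη : η = 1 / (16 * (n : ℝ) ^ δ * L)) (hT : T = n) :
    1 / (μ * η * (1 - 4 * L * η) * T) + 4 * L * η * (T + 1) / ((1 - 4 * L * η) * T)
      ≤ 2 / (n : ℝ) ^ δ :=
  dsvrg_contraction_general L μ n δ hμ hμL hn hδ0 hκ η T hη hT
end

section
/- Let i_1,...,i_N be a uniformly random permutation of {1,...,N}. Define r_ℓ for ℓ = 1,...,Q (with Q ≤ N) by: conditional on i_1,...,i_ℓ and r_1,...,r_{ℓ-1}, set r_ℓ = i_ℓ with probability 1 - (ℓ-1)/N and r_ℓ = i_{ℓ'} with probability 1/N for each ℓ' = 1,...,ℓ-1. Then (r_1,...,r_Q) has the same joint distribution as a sequence of Q i.i.d. indices drawn uniformly with replacement from {1,...,N}. -/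
/-!
Write the output as `allocate s f`, where `s` is the permutation restricted to the first `Q`
positions and `f ℓ` is an auxiliary uniform index deciding whether step `ℓ` reuses an earlier
position or reads the fresh one. For a fixed target `h`, the pairs `(s, f)` with `s` injective
and `allocate s f = h` number `N (N - 1) ⋯ (N - Q + 1)`: going from `Q` to `Q + 1` steps, if the
new target value `y` was already drawn then the reading index is forced and the fresh value of
`s` is free among `N - Q` values, and otherwise the fresh value must be `y` while the auxiliary
index is free among the `N - Q` indices `≥ Q`. Since permutations act transitively on
injections, every injection has equally many extensions to a permutation. Hence all fibres of
the allocation map have the same size, so it pushes the uniform measure to the uniform one.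
-/

open Finset Function

namespace PMF

variable {α β : Type*} [Fintype α] [Nonempty α]

theorem eq_uniformOfFintype_of_apply_eq [Fintype β] [Nonempty β] (p : PMF β)
    (hp : ∀ a b, p a = p b) : p = uniformOfFintype β := by
  ext b
  have hsum : (Fintype.card β : ENNReal) * p b = 1 := by
    rw [← p.tsum_coe, tsum_fintype, ← nsmul_eq_mul, ← Finset.card_univ, ← sum_const]
    exact Finset.sum_congr rfl fun a _ => hp b a
  rw [uniformOfFintype_apply]
  exact ENNReal.eq_inv_of_mul_eq_one_left (by rwa [mul_comm])

theorem map_uniformOfFintype_apply [DecidableEq β] (g : α → β) (b : β) :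
    map g (uniformOfFintype α) b = #{a | g a = b} * (Fintype.card α : ENNReal)⁻¹ := by
  simp [map_apply, tsum_fintype, Finset.sum_ite, eq_comm]

theorem map_uniformOfFintype_eq_uniformOfFintype_of_card_fiber_eq [Fintype β] [Nonempty β]
    [DecidableEq β] {g : α → β} {c : ℕ} (hg : ∀ b, #{a | g a = b} = c) :
    map g (uniformOfFintype α) = uniformOfFintype β :=
  eq_uniformOfFintype_of_apply_eq _ fun a b => by simp only [map_uniformOfFintype_apply, hg]

end PMF

theorem MulAction.card_filter_smul_eq_eq_card_filter_smul_eq_self {G X : Type*} [Group G]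
    [Fintype G] [MulAction G X] [MulAction.IsPretransitive G X] [DecidableEq X] (x₀ x : X) :
    #{g : G | g • x₀ = x} = #{g : G | g • x₀ = x₀} := by
  obtain ⟨τ, rfl⟩ := MulAction.exists_smul_eq G x₀ x
  refine card_nbij' (τ⁻¹ * ·) (τ * ·) ?_ ?_ ?_ ?_ <;> intro g <;>
    simp [mul_smul, inv_smul_eq_iff]

theorem Finset.card_filter_notMem_range {ι α : Type*} [Fintype ι] [Fintype α] [DecidableEq α]
    {s : ι → α} (hs : Injective s) :
    #{a | a ∉ Set.range s} = Fintype.card α - Fintype.card ι := by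
  have hrange : ({a | a ∈ Set.range s} : Finset α) = univ.image s := by ext; simp
  rw [filter_not, card_sdiff_of_subset (filter_subset _ _), hrange,
    card_image_of_injective _ hs, card_univ, card_univ]

namespace DataAllocation

variable {α : Type*} {N Q : ℕ}

/-- With `v = f ℓ` uniform on `Fin N`, step `ℓ` (counted from `0`) reads each earlier position
with probability `1 / N` and the fresh position `ℓ` otherwise, as in the paper. -/
def readPos (ℓ : Fin Q) (v : Fin N) : Fin Q :=
  if h : (v : ℕ) < ℓ then ⟨v, h.trans ℓ.isLt⟩ else ℓ

def allocate (s : Fin Q → α) (f : Fin Q → Fin N) (ℓ : Fin Q) : α :=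
  s (readPos ℓ (f ℓ))

theorem allocate_comp_castLE_apply (hQ : Q ≤ N) (σ : Fin N → α) (f : Fin Q → Fin N)
    (ℓ : Fin Q) :
    allocate (σ ∘ Fin.castLE hQ) f ℓ =
      if (f ℓ : ℕ) < ℓ then σ (f ℓ) else σ (Fin.castLE hQ ℓ) := by
  unfold allocate readPos
  split_ifs <;> rfl

theorem allocate_snoc (s : Fin Q → α) (z : α) (f : Fin Q → Fin N) (x : Fin N) :
    allocate (Fin.snoc s z : Fin (Q + 1) → α) (Fin.snoc f x) =
      Fin.snoc (allocate s f) (if h : (x : ℕ) < Q then s ⟨x, h⟩ else z) := by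
  funext ℓ
  induction ℓ using Fin.lastCases with
  | last =>
    simp only [allocate, readPos, Fin.snoc_last, Fin.val_last]
    split_ifs with h
    · exact Fin.snoc_castSucc (α := fun _ => α) z s ⟨x, h⟩
    · exact Fin.snoc_last (α := fun _ => α) z s
  | cast ℓ =>
    simp only [allocate, readPos, Fin.snoc_castSucc, Fin.val_castSucc]
    split_ifs with h
    · simp [Fin.snoc, h.trans ℓ.isLt]
    · exact Fin.snoc_castSucc (α := fun _ => α) z s _

theorem injective_snoc_and_allocate_snoc_eq_iff (s : Fin Q → Fin N) (z : Fin N)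
    (f : Fin Q → Fin N) (x : Fin N) (h : Fin (Q + 1) → Fin N) :
    Injective (Fin.snoc s z : Fin (Q + 1) → Fin N) ∧ allocate (Fin.snoc s z) (Fin.snoc f x) = h ↔
      (Injective s ∧ allocate s f = Fin.init h) ∧
        z ∉ Set.range s ∧ (if hx : (x : ℕ) < Q then s ⟨x, hx⟩ else z) = h (Fin.last Q) := by
  rw [Fin.snoc_injective_iff, allocate_snoc, ← Fin.snoc_init_self h, Fin.snoc_inj,
    Fin.init_snoc, Fin.snoc_last]
  tauto

theorem card_last_step_eq (hQ : Q < N) {s : Fin Q → Fin N} (hs : Injective s) (y : Fin N) :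
    #{zx : Fin N × Fin N | zx.1 ∉ Set.range s ∧
      (if h : (zx.2 : ℕ) < Q then s ⟨zx.2, h⟩ else zx.1) = y} = N - Q := by
  by_cases hy : y ∈ Set.range s
  · obtain ⟨j, rfl⟩ := hy
    have hforced : univ.filter (fun zx : Fin N × Fin N => zx.1 ∉ Set.range s ∧
        (if h : (zx.2 : ℕ) < Q then s ⟨zx.2, h⟩ else zx.1) = s j) =
        ({z | z ∉ Set.range s} : Finset (Fin N)) ×ˢ {Fin.castLE hQ.le j} := by
      ext ⟨z, x⟩
      simp only [mem_filter, mem_univ, true_and, mem_product, mem_singleton]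
      refine and_congr_right fun hz => ?_
      split_ifs with h
      · simp [hs.eq_iff, Fin.ext_iff]
      · have : (x : ℕ) ≠ j := fun hx => h (hx ▸ j.isLt)
        simp only [Fin.ext_iff, Fin.val_castLE, this, iff_false]
        exact fun hzj => hz ⟨j, (Fin.ext hzj).symm⟩
    rw [hforced, card_product, card_singleton, mul_one, card_filter_notMem_range hs,
      Fintype.card_fin, Fintype.card_fin]
  · have hfresh : univ.filter (fun zx : Fin N × Fin N => zx.1 ∉ Set.range s ∧
        (if h : (zx.2 : ℕ) < Q then s ⟨zx.2, h⟩ else zx.1) = y) =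
        ({y} : Finset (Fin N)) ×ˢ Ici ⟨Q, hQ⟩ := by
      ext ⟨z, x⟩
      simp only [mem_filter, mem_univ, true_and, mem_product, mem_singleton, mem_Ici]
      rw [Fin.le_iff_val_le_val]
      split_ifs with h
      · exact iff_of_false (fun hx => hy ⟨_, hx.2⟩) (by simp; omega)
      · simp only [not_lt] at h
        exact ⟨fun hx => ⟨hx.2, h⟩, fun hx => ⟨hx.1 ▸ hy, hx.1⟩⟩
    rw [hfresh, card_product, card_singleton, one_mul, Fin.card_Ici]

theorem card_injective_allocate_snoc_eq (hQ : Q < N) (h : Fin (Q + 1) → Fin N)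
    {s f : Fin Q → Fin N} (hs : Injective s) (hsf : allocate s f = Fin.init h) :
    #{p : (Fin (Q + 1) → Fin N) × (Fin (Q + 1) → Fin N) |
      (Injective p.1 ∧ allocate p.1 p.2 = h) ∧ (Fin.init p.1, Fin.init p.2) = (s, f)} =
      N - Q := by
  rw [← card_last_step_eq hQ hs (h (Fin.last Q))]
  refine card_nbij' (fun p => (p.1 (Fin.last Q), p.2 (Fin.last Q)))
    (fun zx => (Fin.snoc s zx.1, Fin.snoc f zx.2)) ?_ ?_ ?_ ?_
  · rintro ⟨s', f'⟩ hp
    simp only [coe_filter, mem_univ, true_and, Set.mem_ofPred_eq, Prod.mk.injEq] at hp ⊢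
    obtain ⟨hp, rfl, rfl⟩ := hp
    rw [← Fin.snoc_init_self s', ← Fin.snoc_init_self f',
      injective_snoc_and_allocate_snoc_eq_iff] at hp
    simpa only [Fin.snoc_last] using hp.2
  · rintro ⟨z, x⟩ hzx
    simp only [coe_filter, mem_univ, true_and, Set.mem_ofPred_eq, Prod.mk.injEq] at hzx ⊢
    rw [injective_snoc_and_allocate_snoc_eq_iff, Fin.init_snoc, Fin.init_snoc]
    exact ⟨⟨⟨hs, hsf⟩, hzx⟩, rfl, rfl⟩
  · rintro ⟨s', f'⟩ hp
    simp only [coe_filter, mem_univ, true_and, Set.mem_ofPred_eq, Prod.mk.injEq] at hp ⊢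
    rw [← hp.2.1, ← hp.2.2]
    exact ⟨Fin.snoc_init_self s', Fin.snoc_init_self f'⟩
  · rintro ⟨z, x⟩ -
    simp

theorem card_injective_allocate_eq_descFactorial (hQ : Q ≤ N) (h : Fin Q → Fin N) :
    #{p : (Fin Q → Fin N) × (Fin Q → Fin N) | Injective p.1 ∧ allocate p.1 p.2 = h} =
      N.descFactorial Q := by
  induction Q with
  | zero =>
    rw [filter_true_of_mem fun p _ => ⟨injective_of_subsingleton _, funext fun i => i.elim0⟩]
    simp
  | succ Q ih =>
    rw [card_eq_sum_card_fiberwise (f := fun p => (Fin.init p.1, Fin.init p.2))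
      (t := {q | Injective q.1 ∧ allocate q.1 q.2 = Fin.init h}), sum_const_nat, ih (Nat.le_of_succ_le hQ),
      Nat.descFactorial_succ, mul_comm]
    · rintro ⟨s, f⟩ hsf
      simp only [mem_filter, mem_univ, true_and] at hsf
      rw [filter_filter]
      exact card_injective_allocate_snoc_eq (Nat.lt_of_succ_le hQ) h hsf.1 hsf.2
    · intro p hp
      simp only [coe_filter, mem_univ, true_and, Set.mem_ofPred_eq] at hp ⊢
      rw [← Fin.snoc_init_self p.1, ← Fin.snoc_init_self p.2,
        injective_snoc_and_allocate_snoc_eq_iff] at hp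
      exact hp.1

theorem card_perm_allocate_eq_descFactorial_mul (hQ : Q ≤ N) (h : Fin Q → Fin N) :
    #{p : Equiv.Perm (Fin N) × (Fin Q → Fin N) | allocate (p.1 ∘ Fin.castLE hQ) p.2 = h} =
      N.descFactorial Q * #{σ : Equiv.Perm (Fin N) | σ • Fin.castLEEmb hQ = Fin.castLEEmb hQ} := by
  have := Equiv.Perm.isMultiplyPretransitive (Fin N) Q
  rw [card_eq_sum_card_fiberwise (f := fun p => (p.1 ∘ Fin.castLE hQ, p.2))
    (t := {q | Injective q.1 ∧ allocate q.1 q.2 = h}),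
    ← card_injective_allocate_eq_descFactorial hQ h]
  · refine sum_const_nat fun ⟨s, f⟩ hsf => ?_
    simp only [mem_filter, mem_univ, true_and] at hsf
    rw [← MulAction.card_filter_smul_eq_eq_card_filter_smul_eq_self (Fin.castLEEmb hQ)
      ⟨s, hsf.1⟩]
    refine card_nbij' Prod.fst (fun σ => (σ, f)) ?_ ?_ ?_ ?_
    · rintro ⟨σ, f'⟩ hp
      simp only [coe_filter, mem_filter, mem_univ, true_and, Set.mem_ofPred_eq,
        Prod.mk.injEq] at hp ⊢
      exact Embedding.ext fun i => congrFun hp.2.1 i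
    · intro σ hσ
      simp only [coe_filter, mem_filter, mem_univ, true_and, Set.mem_ofPred_eq,
        Prod.mk.injEq, and_true] at hσ ⊢
      have hσs : σ ∘ Fin.castLE hQ = s := funext fun i => congrArg (· i) hσ
      exact ⟨hσs ▸ hsf.2, hσs⟩
    · rintro ⟨σ, f'⟩ hp
      simp only [coe_filter, mem_filter, mem_univ, true_and, Set.mem_ofPred_eq,
        Prod.mk.injEq] at hp ⊢
      exact hp.2.2.symm
    · intro σ _
      rfl
  · intro p hp
    simp only [coe_filter, mem_univ, true_and, Set.mem_ofPred_eq] at hp ⊢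
    exact ⟨p.1.injective.comp (Fin.castLE_injective hQ), hp⟩

end DataAllocation

theorem data_allocation_iid (N Q : ℕ) (hN : 0 < N) (hQ : Q ≤ N) :
    haveI : Nonempty (Fin N) := Fin.pos_iff_nonempty.mp hN
    PMF.map (fun p : Equiv.Perm (Fin N) × (Fin Q → Fin N) =>
        fun ℓ : Fin Q =>
          if ((p.2 ℓ : ℕ) < (ℓ : ℕ)) then p.1 (p.2 ℓ) else p.1 (Fin.castLE hQ ℓ))
      (PMF.uniformOfFintype (Equiv.Perm (Fin N) × (Fin Q → Fin N)))
    = PMF.uniformOfFintype (Fin Q → Fin N) := by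
  classical
  have : Nonempty (Fin N) := Fin.pos_iff_nonempty.mp hN
  simp only [← DataAllocation.allocate_comp_castLE_apply hQ]
  exact PMF.map_uniformOfFintype_eq_uniformOfFintype_of_card_fiber_eq
    (DataAllocation.card_perm_allocate_eq_descFactorial_mul hQ)
end

section
/- Let Y be a hypergeometric random variable counting successes in n draws without replacement from a population of size N containing exactly m successes, where n ≤ N. Then for any integer r with 1 ≤ r ≤ n, Prob(Y ≥ r) ≤ (1/r)^r · ((n-1)/(n-r))^{n-r} when n·m/N = 1 (i.e., the expected number of successes is 1). -/
lemma lemA (m n j : ℕ) : m.descFactorial j * n ^ j ≤ (n * m).descFactorial j := by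
  rw [Nat.descFactorial_eq_prod_range, Nat.descFactorial_eq_prod_range]
  calc (∏ i ∈ Finset.range j, (m - i)) * n ^ j
      = ∏ i ∈ Finset.range j, ((m - i) * n) := by
        rw [Finset.prod_mul_distrib, Finset.prod_const, Finset.card_range]
    _ ≤ ∏ i ∈ Finset.range j, (n * m - i) := by
        apply Finset.prod_le_prod (fun _ _ => Nat.zero_le _)
        intro i hi
        rcases Nat.eq_zero_or_pos n with h | h
        · simp [h]
        · calc (m - i) * n = m * n - i * n := Nat.sub_mul m i n
            _ ≤ m * n - i := Nat.sub_le_sub_left (Nat.le_mul_of_pos_right i h) _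
            _ = n * m - i := by rw [Nat.mul_comm]

lemma lemA' (m n j : ℕ) : m.choose j * n ^ j ≤ (n * m).choose j := by
  have h := lemA m n j
  rw [Nat.descFactorial_eq_factorial_mul_choose, Nat.descFactorial_eq_factorial_mul_choose,
    Nat.mul_assoc] at h
  exact Nat.le_of_mul_le_mul_left h (Nat.factorial_pos j)

lemma lemD {N n m j : ℕ} (hj : j ≤ n) (hn : n ≤ N) (hmean : n * m = N) :
    m.choose j * (N - j).choose (n - j) * n ^ j ≤ n.choose j * N.choose n := by
  calc m.choose j * (N - j).choose (n - j) * n ^ j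
      = m.choose j * n ^ j * (N - j).choose (n - j) := by ring
    _ ≤ N.choose j * (N - j).choose (n - j) := by
        apply Nat.mul_le_mul_right
        rw [← hmean]; exact lemA' m n j
    _ = N.choose n * n.choose j := (Nat.choose_mul hj).symm
    _ = n.choose j * N.choose n := Nat.mul_comm _ _

open Finset

lemma lemC {N n j : ℕ} (hj : j ≤ n) (T : Finset (Fin N)) (hT : T.card = j) :
    ((powersetCard n (univ : Finset (Fin N))).filter (fun A => T ⊆ A)).card
      = (N - j).choose (n - j) := by
  have hcard : (univ \ T).card = N - j := by
    rw [card_sdiff_of_subset (subset_univ T), card_univ, Fintype.card_fin, hT]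
  rw [← hcard, ← card_powersetCard (n - j) (univ \ T)]
  apply Finset.card_bij' (i := fun A _ => A \ T) (j := fun B _ => B ∪ T)
  · intro A hA
    simp only [mem_filter, mem_powersetCard] at hA
    obtain ⟨⟨-, hAn⟩, hTA⟩ := hA
    simp only [mem_powersetCard]
    constructor
    · exact sdiff_subset_sdiff (subset_univ A) (le_refl T)
    · rw [card_sdiff_of_subset hTA, hAn, hT]
  · intro B hB
    simp only [mem_powersetCard] at hB
    obtain ⟨hBsub, hBn⟩ := hB
    have hdisj : Disjoint B T := (subset_sdiff.mp hBsub).2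
    simp only [mem_filter, mem_powersetCard]
    refine ⟨⟨subset_univ _, ?_⟩, subset_union_right⟩
    rw [card_union_of_disjoint hdisj, hBn, hT]
    omega
  · intro A hA
    simp only [mem_filter] at hA
    exact sdiff_union_of_subset hA.2
  · intro B hB
    simp only [mem_powersetCard] at hB
    have hdisj : Disjoint B T := (subset_sdiff.mp hB.1).2
    exact union_sdiff_cancel_right hdisj

lemma lemB {N n m j : ℕ} (hj : j ≤ n) (S : Finset (Fin N)) (hS : S.card = m) :
    ∑ A ∈ powersetCard n (univ : Finset (Fin N)), ((A ∩ S).card.choose j)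
      = m.choose j * (N - j).choose (n - j) := by
  have h1 : ∀ A : Finset (Fin N),
      (A ∩ S).card.choose j = ((powersetCard j S).filter (fun T => T ⊆ A)).card := by
    intro A
    rw [← card_powersetCard j (A ∩ S)]
    congr 1
    ext T
    simp only [mem_powersetCard, mem_filter, subset_inter_iff]
    tauto
  simp_rw [h1, Finset.card_filter]
  rw [Finset.sum_comm]
  have h2 : ∀ T ∈ powersetCard j S,
      (∑ A ∈ powersetCard n (univ : Finset (Fin N)), if T ⊆ A then 1 else 0)
        = (N - j).choose (n - j) := by
    intro T hT
    rw [← Finset.card_filter]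
    exact lemC hj T (mem_powersetCard.mp hT).2
  rw [Finset.sum_congr rfl h2, Finset.sum_const, card_powersetCard, hS, smul_eq_mul]

lemma mgf {N n m : ℕ} (hn1 : 1 ≤ n) (hn : n ≤ N) (hmean : n * m = N)
    (S : Finset (Fin N)) (hS : S.card = m) (x : ℝ) (hx : 1 ≤ x) :
    ∑ A ∈ powersetCard n (univ : Finset (Fin N)), x ^ ((A ∩ S).card)
      ≤ (N.choose n : ℝ) * (1 + (x - 1) / n) ^ n := by
  classical
  have hkle : ∀ A ∈ powersetCard n (univ : Finset (Fin N)), (A ∩ S).card ≤ n := by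
    intro A hA
    rw [mem_powersetCard] at hA
    calc (A ∩ S).card ≤ A.card := card_le_card inter_subset_left
      _ = n := hA.2
  have step1 : ∀ A ∈ powersetCard n (univ : Finset (Fin N)), x ^ ((A ∩ S).card)
      = ∑ j ∈ Finset.range (n+1), ((A ∩ S).card.choose j : ℝ) * (x-1)^j := by
    intro A hA
    have h1 : x ^ ((A ∩ S).card) = ((x - 1) + 1) ^ ((A ∩ S).card) := by ring_nf
    rw [h1, add_pow]
    simp only [one_pow, mul_one]
    rw [Finset.sum_subset (Finset.range_subset_range.2 (Nat.succ_le_succ (hkle A hA)))]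
    · exact Finset.sum_congr rfl (fun j _ => by ring)
    · intro j _ hj
      rw [Finset.mem_range, not_lt] at hj
      rw [Nat.choose_eq_zero_of_lt (by omega)]
      simp
  rw [Finset.sum_congr rfl step1, Finset.sum_comm]
  have key : ∀ j ∈ Finset.range (n+1),
      (∑ A ∈ powersetCard n (univ : Finset (Fin N)), ((A ∩ S).card.choose j : ℝ) * (x-1)^j)
        ≤ (n.choose j : ℝ) * ((x-1)/n)^j * (N.choose n : ℝ) := by
    intro j hj
    rw [Finset.mem_range] at hj
    have hjn : j ≤ n := by omega
    rw [← Finset.sum_mul, ← Nat.cast_sum, lemB hjn S hS]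
    have hd := lemD hjn hn hmean
    have hn0 : (0:ℝ) < (n:ℝ) := by exact_mod_cast hn1
    have hnpos : (0 : ℝ) < (n : ℝ)^j := by positivity
    have hx1 : (0:ℝ) ≤ (x-1)^j := pow_nonneg (by linarith) j
    have hcast : ((m.choose j * (N-j).choose (n-j) : ℕ) : ℝ) * (n:ℝ)^j
        ≤ (n.choose j : ℝ) * (N.choose n : ℝ) := by exact_mod_cast hd
    calc ((m.choose j * (N - j).choose (n - j) : ℕ) : ℝ) * (x-1)^j
        ≤ ((n.choose j : ℝ) * (N.choose n : ℝ) / (n:ℝ)^j) * (x-1)^j := by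
          apply mul_le_mul_of_nonneg_right _ hx1
          rw [le_div_iff₀ hnpos]; exact hcast
      _ = (n.choose j : ℝ) * ((x-1)/n)^j * (N.choose n : ℝ) := by
          rw [div_pow]; ring
  calc ∑ j ∈ Finset.range (n+1), ∑ A ∈ powersetCard n (univ : Finset (Fin N)),
        ((A ∩ S).card.choose j : ℝ) * (x-1)^j
      ≤ ∑ j ∈ Finset.range (n+1), (n.choose j : ℝ) * ((x-1)/n)^j * (N.choose n : ℝ) :=
        Finset.sum_le_sum key
    _ = (N.choose n : ℝ) * (1 + (x-1)/n)^n := by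
        rw [add_comm (1:ℝ), add_pow]
        simp only [one_pow, mul_one]
        rw [Finset.mul_sum]
        exact Finset.sum_congr rfl (fun j _ => by ring)

theorem hypergeometric_tail (N n m r : ℕ) (hn : n ≤ N) (hr1 : 1 ≤ r) (hrn : r ≤ n)
    (hmean : n * m = N) (S : Finset (Fin N)) (hS : S.card = m) :
    (((Finset.powersetCard n (Finset.univ : Finset (Fin N))).filter
        (fun A => r ≤ (A ∩ S).card)).card : ℝ) / (N.choose n)
      ≤ (1 / (r : ℝ)) ^ r * (((n : ℝ) - 1) / ((n : ℝ) - (r : ℝ))) ^ (n - r) := by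
  classical
  have hn1 : 1 ≤ n := le_trans hr1 hrn
  have hCpos : 0 < N.choose n := Nat.choose_pos hn
  have hCposR : (0:ℝ) < (N.choose n : ℝ) := by exact_mod_cast hCpos
  set F := (Finset.powersetCard n (Finset.univ : Finset (Fin N))).filter
      (fun A => r ≤ (A ∩ S).card) with hF
  by_cases hreq : r = n
  · -- case r = n
    subst hreq
    have h1 : F.card ≤ ∑ A ∈ powersetCard r (univ : Finset (Fin N)), ((A ∩ S).card.choose r) := by
      calc F.card = ∑ _A ∈ F, 1 := by rw [Finset.sum_const, smul_eq_mul, mul_one]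
        _ ≤ ∑ A ∈ F, ((A ∩ S).card.choose r) := by
            apply Finset.sum_le_sum
            intro A hA
            rw [hF, Finset.mem_filter] at hA
            exact Nat.choose_pos hA.2
        _ ≤ ∑ A ∈ powersetCard r (univ : Finset (Fin N)), ((A ∩ S).card.choose r) :=
            Finset.sum_le_sum_of_subset (Finset.filter_subset _ _)
    rw [lemB (le_refl r) S hS, Nat.sub_self, Nat.choose_zero_right, mul_one] at h1
    have h2 : F.card * r ^ r ≤ N.choose r := by
      calc F.card * r ^ r ≤ m.choose r * r ^ r := Nat.mul_le_mul_right _ h1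
        _ ≤ (r * m).choose r := lemA' m r r
        _ = N.choose r := by rw [hmean]
    rw [Nat.sub_self, pow_zero, mul_one, div_le_iff₀ hCposR]
    have h2R : (F.card : ℝ) * (r:ℝ) ^ r ≤ (N.choose r : ℝ) := by exact_mod_cast h2
    have hrpos : (0:ℝ) < (r:ℝ) ^ r := by
      have : (0:ℝ) < (r:ℝ) := by exact_mod_cast hr1
      positivity
    rw [← sub_nonneg]
    have : (1 / (r:ℝ)) ^ r * (N.choose r : ℝ) - (F.card : ℝ)
        = ((N.choose r : ℝ) - (F.card : ℝ) * (r:ℝ)^r) / (r:ℝ)^r := by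
      field_simp
      have hh : (1 / (r:ℝ)) ^ r * (r:ℝ) ^ r = 1 := by
        rw [← mul_pow, one_div, inv_mul_cancel₀ (by exact_mod_cast (by omega : r ≠ 0)), one_pow]
      linear_combination (N.choose r : ℝ) * hh
    rw [this]
    apply div_nonneg (by linarith) (le_of_lt hrpos)
  · -- case r < n
    have hrlt : r < n := lt_of_le_of_ne hrn hreq
    set a : ℝ := (n : ℝ) with ha
    set b : ℝ := (r : ℝ) with hb
    have hb1 : (1:ℝ) ≤ b := by rw [hb]; exact_mod_cast hr1
    have hab : b + 1 ≤ a := by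
      rw [ha, hb]
      have : (r:ℝ) + 1 ≤ (n:ℝ) := by exact_mod_cast hrlt
      linarith
    have hab0 : (0:ℝ) < a - b := by linarith
    set x : ℝ := b * (a - 1) / (a - b) with hx_def
    set q : ℝ := (a - 1) / (a - b) with hq_def
    have hq0 : 0 < q := div_pos (by linarith) hab0
    have hxq : x = b * q := by rw [hx_def, hq_def, mul_div_assoc]
    have hx1 : 1 ≤ x := by
      rw [hx_def, le_div_iff₀ hab0]
      nlinarith
    have markov : (F.card : ℝ) * x ^ r
        ≤ ∑ A ∈ powersetCard n (univ : Finset (Fin N)), x ^ ((A ∩ S).card) := by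
      calc (F.card : ℝ) * x ^ r = ∑ _A ∈ F, x ^ r := by rw [Finset.sum_const, nsmul_eq_mul]
        _ ≤ ∑ A ∈ F, x ^ ((A ∩ S).card) := by
            apply Finset.sum_le_sum
            intro A hA
            rw [hF, Finset.mem_filter] at hA
            exact pow_le_pow_right₀ hx1 hA.2
        _ ≤ ∑ A ∈ powersetCard n (univ : Finset (Fin N)), x ^ ((A ∩ S).card) := by
            apply Finset.sum_le_sum_of_subset_of_nonneg (Finset.filter_subset _ _)
            intro A _ _
            exact pow_nonneg (by linarith) _
    have hsimp : 1 + (x - 1) / a = q := by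
      rw [hx_def, hq_def]
      have ha0 : a ≠ 0 := ne_of_gt (by linarith)
      have hab' : a - b ≠ 0 := ne_of_gt hab0
      field_simp
      ring
    have main : (F.card : ℝ) * x ^ r ≤ (N.choose n : ℝ) * q ^ n := by
      calc (F.card : ℝ) * x ^ r
          ≤ (N.choose n : ℝ) * (1 + (x - 1) / n) ^ n := le_trans markov
            (mgf hn1 hn hmean S hS x hx1)
        _ = (N.choose n : ℝ) * q ^ n := by rw [← ha, hsimp]
    have hqsplit : q ^ n = q ^ (n - r) * q ^ r := by
      rw [← pow_add, Nat.sub_add_cancel hrn]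
    rw [hxq, mul_pow, hqsplit, ← mul_assoc, ← mul_assoc] at main
    have hqr : (0:ℝ) < q ^ r := pow_pos hq0 r
    have main2 : (F.card : ℝ) * b ^ r ≤ (N.choose n : ℝ) * q ^ (n - r) :=
      le_of_mul_le_mul_right main hqr
    rw [div_le_iff₀ hCposR]
    have hbpos : (0:ℝ) < b ^ r := pow_pos (by linarith) r
    rw [← sub_nonneg]
    have heq : (1 / b) ^ r * q ^ (n - r) * (N.choose n : ℝ) - (F.card : ℝ)
        = ((N.choose n : ℝ) * q ^ (n-r) - (F.card : ℝ) * b ^ r) / b ^ r := by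
      field_simp
      have hh : (1 / b) ^ r * b ^ r = 1 := by
        rw [← mul_pow, one_div, inv_mul_cancel₀ (ne_of_gt (by linarith)), one_pow]
      linear_combination (q ^ (n - r) * (N.choose n : ℝ)) * hh
    rw [heq]
    exact div_nonneg (by linarith) (le_of_lt hbpos)
end
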